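/- arXiv:2111.01832 — 2 statements merged into one kernel-verified Lean document; each statement's English description precedes it below -/
import Mathlib

section
/- Let t ↦ (x_t, y_t) be the unique solution of the ODE ż = B(z) on its maximal forward interval of definition [0, 𝒯), with initial condition (x∘, y∘) ∈ S. Then the function t ↦ H(x_t, y_t) is strictly decreasing on [0, 𝒯) if and only if (x∘, y∘) ≠ (x_∞, 0). -/
open Real Set Filter

/-- The optimal-velocity function `V(x) = tanh(x-2) - tanh(-2)`. -/
noncomputable def V (x : ℝ) : ℝ := Real.tanh (x - 2) - Real.tanh (-2)

/-- Inverse hyperbolic tangent. -/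
noncomputable def artanh (v : ℝ) : ℝ := (1 / 2) * Real.log ((1 + v) / (1 - v))

/-- The equilibrium following distance `x_∞ = d (2 + artanh(v∘ + tanh(-2)))`. -/
noncomputable def xInf (d v₀ : ℝ) : ℝ := d * (2 + _root_.artanh (v₀ + Real.tanh (-2)))

/-- The potential `P(x) = α ∫_{x_∞}^x ( V(s/d) - v∘ ) ds`. -/
noncomputable def P (α d v₀ : ℝ) (x : ℝ) : ℝ :=
  α * ∫ s in (xInf d v₀)..x, (V (s / d) - v₀)

/-- The Hamiltonian `H(x,y) = y²/2 + P(x)`. -/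
noncomputable def H (α d v₀ : ℝ) (x y : ℝ) : ℝ := y ^ 2 / 2 + P α d v₀ x

/-- `IsSol α β d v₀ x y T` says that `t ↦ (x t, y t)` solves the ODE `ż = B(z)` on the
forward time interval `[0, T)`, staying in the state space `S = (0,∞) × ℝ`. -/
def IsSol (α β d v₀ : ℝ) (x y : ℝ → ℝ) (T : EReal) : Prop :=
  ∀ t : ℝ, 0 ≤ t → (t : EReal) < T →
    0 < x t ∧ HasDerivAt x (y t) t ∧
      HasDerivAt y (-α * (V (x t / d) - v₀ + y t) - β * y t / (x t) ^ 2) t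

/-- `[0, T)` is the maximal forward interval of definition: the solution admits no
extension to a strictly larger forward interval with the same initial condition. -/
def IsMaximal (α β d v₀ : ℝ) (x y : ℝ → ℝ) (T : EReal) : Prop :=
  ∀ (T' : EReal) (x' y' : ℝ → ℝ), T < T' → IsSol α β d v₀ x' y' T' →
    x' 0 = x 0 → y' 0 = y 0 → False


/-! Along a solution `H` has derivative `-(α + β / x²) y² ≤ 0`, so it is nonincreasing, and it
fails to be strictly decreasing only if `y` vanishes on a whole time interval. Then `ẏ = 0` there
too, which forces `V(x/d) = v∘`, i.e. the solution sits at the equilibrium `(x_∞, 0)`; as the vector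
field is `C¹` on `S`, backward uniqueness puts it there already at time `0`. Conversely `P` is
minimal at `x_∞`, so `H ≥ 0 = H(x_∞, 0)` and a solution starting at the equilibrium cannot make
`H` strictly decrease. -/

open Topology

theorem Real.tanh_strictMono : StrictMono Real.tanh := fun a b hab => by
  have hmem (z : ℝ) : Real.tanh z ∈ Ioo (-1) 1 := ⟨Real.neg_one_lt_tanh z, Real.tanh_lt_one z⟩
  rwa [← Real.strictMonoOn_artanh.lt_iff_lt (hmem a) (hmem b), Real.artanh_tanh, Real.artanh_tanh]

theorem Real.contDiff_tanh {n : WithTop ℕ∞} : ContDiff ℝ n Real.tanh := by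
  simp_rw [show Real.tanh = fun z => Real.sinh z / Real.cosh z from
    funext Real.tanh_eq_sinh_div_cosh]
  exact Real.contDiff_sinh.div Real.contDiff_cosh fun z => (Real.cosh_pos z).ne'

theorem strictAntiOn_of_hasDerivAt_nonpos {D : Set ℝ} (hD : Convex ℝ D) {f f' : ℝ → ℝ}
    (hf : ∀ t ∈ D, HasDerivAt f (f' t) t) (hf'₀ : ∀ t ∈ D, f' t ≤ 0)
    (hf'_ne : ∀ a b, a < b → Icc a b ⊆ D → ∃ t ∈ Ioo a b, f' t ≠ 0) : StrictAntiOn f D := by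
  have hanti : AntitoneOn f D :=
    antitoneOn_of_hasDerivWithinAt_nonpos hD
      (fun t ht => (hf t ht).continuousAt.continuousWithinAt)
      (fun t ht => (hf t (interior_subset ht)).hasDerivWithinAt)
      (fun t ht => hf'₀ t (interior_subset ht))
  intro a ha b hb hab
  have hsub : Icc a b ⊆ D := hD.ordConnected.out ha hb
  refine (hanti ha hb hab.le).lt_of_ne fun hba => ?_
  obtain ⟨t, ht, hf't⟩ := hf'_ne a b hab hsub
  have hconst : ∀ s ∈ Icc a b, f s = f a := fun s hs =>
    le_antisymm (hanti ha (hsub hs) hs.1) (hba ▸ hanti (hsub hs) hb hs.2)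
  have hf_loc : f =ᶠ[𝓝 t] fun _ => f a :=
    Filter.mem_of_superset (Icc_mem_nhds ht.1 ht.2) hconst
  exact hf't ((hf t (hsub (Ioo_subset_Icc_self ht))).unique
    ((hasDerivAt_const t (f a)).congr_of_eventuallyEq hf_loc))

theorem ODE_solution_eq_equilibrium_of_mem_Icc_left {E : Type*} [NormedAddCommGroup E]
    [NormedSpace ℝ E] {F : E → E} {U : Set E} (hU : Convex ℝ U) (hF : ContDiffOn ℝ 1 F U)
    {f : ℝ → E} {a b : ℝ} (hf : ∀ t ∈ Icc a b, HasDerivAt f (F (f t)) t)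
    (hfU : ∀ t ∈ Icc a b, f t ∈ U) {e : E} (heU : e ∈ U) (he : F e = 0) (hfb : f b = e) :
    EqOn f (fun _ => e) (Icc a b) := by
  have hfc : ContinuousOn f (Icc a b) := fun t ht => (hf t ht).continuousAt.continuousWithinAt
  set S := f '' Icc a b ∪ {e}
  have hSU : S ⊆ U := union_subset (image_subset_iff.2 hfU) (singleton_subset_iff.2 heU)
  obtain ⟨K, hK⟩ := ((hF.locallyLipschitzOn hU).mono hSU).exists_lipschitzOnWith_of_compact
    ((isCompact_Icc.image_of_continuousOn hfc).union isCompact_singleton)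
  refine ODE_solution_unique_of_mem_Icc_left (v := fun _ => F) (s := fun _ => S)
    (fun _ _ => hK) hfc (fun t ht => (hf t (Ioc_subset_Icc_self ht)).hasDerivWithinAt)
    (fun t ht => .inl (mem_image_of_mem f (Ioc_subset_Icc_self ht))) continuousOn_const
    (fun t _ => by simpa [he] using hasDerivWithinAt_const t (Iic t) e)
    (fun _ _ => .inr rfl) hfb

@[fun_prop]
theorem contDiff_V {n : WithTop ℕ∞} : ContDiff ℝ n V :=
  (Real.contDiff_tanh.comp (contDiff_id.sub contDiff_const)).sub contDiff_const

theorem V_strictMono : StrictMono V := fun _ _ h =>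
  sub_lt_sub_right (Real.tanh_strictMono (sub_lt_sub_right h 2)) _

theorem V_xInf_div_eq {d v₀ : ℝ} (hd : 0 < d) (hv₀ : v₀ ∈ Ioo 0 (1 + Real.tanh 2)) :
    V (xInf d v₀ / d) = v₀ := by
  have hw : v₀ + Real.tanh (-2) ∈ Ioo (-1) 1 := by
    rw [Real.tanh_neg]
    constructor <;> linarith [hv₀.1, hv₀.2, Real.tanh_lt_one 2]
  have hartanh : _root_.artanh (v₀ + Real.tanh (-2)) = Real.artanh (v₀ + Real.tanh (-2)) :=
    (Real.artanh_eq_half_log (Ioo_subset_Icc_self hw)).symm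
  rw [V, xInf, mul_div_cancel_left₀ _ hd.ne', add_sub_cancel_left, hartanh, Real.tanh_artanh hw,
    add_sub_cancel_right]

theorem V_div_eq_iff {d v₀ z : ℝ} (hd : 0 < d) (hv₀ : v₀ ∈ Ioo 0 (1 + Real.tanh 2)) :
    V (z / d) = v₀ ↔ z = xInf d v₀ := by
  conv_lhs => rw [← V_xInf_div_eq hd hv₀]
  rw [V_strictMono.injective.eq_iff, div_left_inj' hd.ne']

theorem V_div_sub_nonneg_iff {d v₀ z : ℝ} (hd : 0 < d) (hv₀ : v₀ ∈ Ioo 0 (1 + Real.tanh 2)) :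
    0 ≤ V (z / d) - v₀ ↔ xInf d v₀ ≤ z := by
  conv_lhs => rw [sub_nonneg, ← V_xInf_div_eq hd hv₀]
  rw [V_strictMono.le_iff_le, div_le_div_iff_of_pos_right hd]

theorem V_div_sub_nonpos_iff {d v₀ z : ℝ} (hd : 0 < d) (hv₀ : v₀ ∈ Ioo 0 (1 + Real.tanh 2)) :
    V (z / d) - v₀ ≤ 0 ↔ z ≤ xInf d v₀ := by
  conv_lhs => rw [sub_nonpos, ← V_xInf_div_eq hd hv₀]
  rw [V_strictMono.le_iff_le, div_le_div_iff_of_pos_right hd]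

theorem hasDerivAt_P (α d v₀ z : ℝ) : HasDerivAt (P α d v₀) (α * (V (z / d) - v₀)) z := by
  have hcont : Continuous fun s => V (s / d) - v₀ :=
    ((contDiff_V (n := 0)).continuous.comp (continuous_id.div_const d)).sub continuous_const
  exact (intervalIntegral.integral_hasDerivAt_right (hcont.intervalIntegrable _ _)
    (hcont.stronglyMeasurableAtFilter _ _) hcont.continuousAt).const_mul α

theorem P_nonneg {α d v₀ : ℝ} (hα : 0 ≤ α) (hd : 0 < d) (hv₀ : v₀ ∈ Ioo 0 (1 + Real.tanh 2))
    (z : ℝ) : 0 ≤ P α d v₀ z := by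
  refine mul_nonneg hα ?_
  rcases le_total (xInf d v₀) z with hle | hle
  · exact intervalIntegral.integral_nonneg hle fun s hs =>
      (V_div_sub_nonneg_iff hd hv₀).2 hs.1
  · rw [intervalIntegral.integral_symm, ← intervalIntegral.integral_neg]
    exact intervalIntegral.integral_nonneg hle fun s hs =>
      neg_nonneg.2 ((V_div_sub_nonpos_iff hd hv₀).2 hs.2)

theorem H_nonneg {α d v₀ : ℝ} (hα : 0 ≤ α) (hd : 0 < d) (hv₀ : v₀ ∈ Ioo 0 (1 + Real.tanh 2))
    (x y : ℝ) : 0 ≤ H α d v₀ x y :=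
  add_nonneg (by positivity) (P_nonneg hα hd hv₀ x)

theorem H_xInf_zero (α d v₀ : ℝ) : H α d v₀ (xInf d v₀) 0 = 0 := by
  simp [H, P]

noncomputable def B (α β d v₀ : ℝ) (p : ℝ × ℝ) : ℝ × ℝ :=
  (p.2, -α * (V (p.1 / d) - v₀ + p.2) - β * p.2 / p.1 ^ 2)

theorem contDiffOn_B (α β d v₀ : ℝ) : ContDiffOn ℝ 1 (B α β d v₀) (Ioi 0 ×ˢ univ) := by
  unfold B
  fun_prop (disch := (intro p hp; simp at hp; positivity))

section Solution

variable {α β d v₀ : ℝ} {x y : ℝ → ℝ} {T : EReal}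

theorem IsSol.hasDerivAt_B (hsol : IsSol α β d v₀ x y T) {t : ℝ} (ht0 : 0 ≤ t)
    (htT : (t : EReal) < T) :
    HasDerivAt (fun s => (x s, y s)) (B α β d v₀ (x t, y t)) t :=
  (hsol t ht0 htT).2.1.prodMk (hsol t ht0 htT).2.2

theorem IsSol.hasDerivAt_H (hsol : IsSol α β d v₀ x y T) {t : ℝ} (ht0 : 0 ≤ t)
    (htT : (t : EReal) < T) :
    HasDerivAt (fun s => H α d v₀ (x s) (y s)) (-(α + β / x t ^ 2) * y t ^ 2) t := by
  obtain ⟨-, hx, hy⟩ := hsol t ht0 htT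
  refine (((hy.pow 2).div_const 2).add ((hasDerivAt_P α d v₀ (x t)).comp t hx)).congr_deriv ?_
  norm_num
  ring

theorem IsSol.eq_xInf_of_eventuallyEq_zero (hα : 0 < α) (hd : 0 < d)
    (hv₀ : v₀ ∈ Ioo 0 (1 + Real.tanh 2)) (hsol : IsSol α β d v₀ x y T) {τ : ℝ} (hτ0 : 0 ≤ τ)
    (hτT : (τ : EReal) < T) (hy : y =ᶠ[𝓝 τ] 0) : x τ = xInf d v₀ := by
  have hy' := (hsol τ hτ0 hτT).2.2.unique ((hasDerivAt_const τ 0).congr_of_eventuallyEq hy)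
  rw [hy.eq_of_nhds, Pi.zero_apply, mul_zero, zero_div, sub_zero, add_zero, neg_mul,
    neg_eq_zero, mul_eq_zero, sub_eq_zero, V_div_eq_iff hd hv₀] at hy'
  exact hy'.resolve_left hα.ne'

theorem IsSol.initial_eq_of_eq_equilibrium (hd : 0 < d) (hv₀ : v₀ ∈ Ioo 0 (1 + Real.tanh 2))
    (hsol : IsSol α β d v₀ x y T) {τ : ℝ} (hτ0 : 0 ≤ τ) (hτT : (τ : EReal) < T)
    (hτ : (x τ, y τ) = (xInf d v₀, 0)) : (x 0, y 0) = (xInf d v₀, 0) := by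
  have hdom : ∀ t ∈ Icc 0 τ, 0 ≤ t ∧ (t : EReal) < T := fun t ht =>
    ⟨ht.1, (EReal.coe_le_coe_iff.2 ht.2).trans_lt hτT⟩
  refine ODE_solution_eq_equilibrium_of_mem_Icc_left ((convex_Ioi 0).prod convex_univ)
    (contDiffOn_B α β d v₀) (fun t ht => hsol.hasDerivAt_B (hdom t ht).1 (hdom t ht).2)
    (fun t ht => ⟨(hsol t (hdom t ht).1 (hdom t ht).2).1, trivial⟩) ?_ ?_ hτ
    (left_mem_Icc.2 hτ0)
  · exact ⟨(Prod.ext_iff.1 hτ).1 ▸ (hsol τ hτ0 hτT).1, trivial⟩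
  · simp [B, V_xInf_div_eq hd hv₀]

theorem IsSol.initial_eq_of_eqOn_zero (hα : 0 < α) (hd : 0 < d)
    (hv₀ : v₀ ∈ Ioo 0 (1 + Real.tanh 2)) (hsol : IsSol α β d v₀ x y T) {a b : ℝ} (hab : a < b)
    (ha : 0 ≤ a) (hbT : (b : EReal) < T) (hy : EqOn y 0 (Ioo a b)) :
    (x 0, y 0) = (xInf d v₀, 0) := by
  obtain ⟨τ, hτ⟩ := exists_between hab
  have hτ0 : 0 ≤ τ := ha.trans hτ.1.le
  have hτT : (τ : EReal) < T := (EReal.coe_lt_coe_iff.2 hτ.2).trans hbT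
  have hy_loc : y =ᶠ[𝓝 τ] 0 := Filter.mem_of_superset (Ioo_mem_nhds hτ.1 hτ.2) hy
  refine hsol.initial_eq_of_eq_equilibrium hd hv₀ hτ0 hτT ?_
  rw [hsol.eq_xInf_of_eventuallyEq_zero hα hd hv₀ hτ0 hτT hy_loc, hy hτ, Pi.zero_apply]

end Solution

theorem hamiltonian_strictly_decreasing_iff_general (α β d v₀ : ℝ)
    (hα : 0 < α) (hβ : 0 < β) (hd : 0 < d)
    (hv₀ : v₀ ∈ Set.Ioo 0 (1 + Real.tanh 2))
    (x y : ℝ → ℝ) (T : EReal) (hT : 0 < T)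
    (x₀ y₀ : ℝ) (hinit : x 0 = x₀ ∧ y 0 = y₀)
    (hsol : IsSol α β d v₀ x y T) :
    StrictAntiOn (fun t => H α d v₀ (x t) (y t)) {t : ℝ | 0 ≤ t ∧ (t : EReal) < T} ↔
      (x₀, y₀) ≠ (xInf d v₀, 0) := by
  obtain ⟨rfl, rfl⟩ := hinit
  set D := {t : ℝ | 0 ≤ t ∧ (t : EReal) < T}
  have hD : Convex ℝ D := Set.OrdConnected.convex
    ⟨fun a ha b hb t ht => ⟨ha.1.trans ht.1, (EReal.coe_le_coe_iff.2 ht.2).trans_lt hb.2⟩⟩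
  have hfriction : ∀ t ∈ D, 0 < α + β / x t ^ 2 := fun t ht => by
    have := (hsol t ht.1 ht.2).1
    positivity
  constructor
  · intro hanti hrest
    obtain ⟨hx0, hy0⟩ := Prod.mk.inj hrest
    obtain ⟨c, hc0, hcT⟩ := EReal.exists_between_coe_real hT
    have hdecr : H α d v₀ (x c) (y c) < H α d v₀ (x 0) (y 0) :=
      hanti ⟨le_rfl, hT⟩ ⟨(EReal.coe_pos.1 hc0).le, hcT⟩ (EReal.coe_pos.1 hc0)
    rw [hx0, hy0, H_xInf_zero] at hdecr
    exact (H_nonneg hα.le hd hv₀ _ _).not_gt hdecr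
  · intro hne
    refine strictAntiOn_of_hasDerivAt_nonpos hD (fun t ht => hsol.hasDerivAt_H ht.1 ht.2)
      (fun t ht => mul_nonpos_of_nonpos_of_nonneg (neg_nonpos.2 (hfriction t ht).le)
        (sq_nonneg _)) fun a b hab hsub => ?_
    by_contra! hzero
    refine hne (hsol.initial_eq_of_eqOn_zero hα hd hv₀ hab (hsub (left_mem_Icc.2 hab.le)).1
      (hsub (right_mem_Icc.2 hab.le)).2 fun t ht => ?_)
    have hfric := (hfriction t (hsub (Ioo_subset_Icc_self ht))).ne'
    exact pow_eq_zero_iff two_ne_zero |>.1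
      ((mul_eq_zero.1 (hzero t ht)).resolve_left (neg_ne_zero.2 hfric))

/-- `t ↦ H(x_t, y_t)` is strictly decreasing on `[0, 𝒯)` if and only if
`(x∘, y∘) ≠ (x_∞, 0)`. -/
theorem hamiltonian_strictly_decreasing_iff (α β d v₀ : ℝ)
    (hα : 0 < α) (hβ : 0 < β) (hd : 0 < d)
    (hv₀ : v₀ ∈ Set.Ioo 0 (1 + Real.tanh 2))
    (x y : ℝ → ℝ) (T : EReal) (hT : 0 < T)
    (x₀ y₀ : ℝ) (hx₀ : 0 < x₀) (hinit : x 0 = x₀ ∧ y 0 = y₀)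
    (hsol : IsSol α β d v₀ x y T) (hmax : IsMaximal α β d v₀ x y T) :
    StrictAntiOn (fun t => H α d v₀ (x t) (y t)) {t : ℝ | 0 ≤ t ∧ (t : EReal) < T} ↔
      (x₀, y₀) ≠ (xInf d v₀, 0) :=
  hamiltonian_strictly_decreasing_iff_general α β d v₀ hα hβ hd hv₀ x y T hT x₀ y₀ hinit hsol
end

section
/- Let φ be the unique solution of the ODE φ'(y) = f(y, φ(y)) with initial condition φ(y₀) = x₀, where y₀ < 0, 0 < x₀ < x_-, and f(y, Φ) = -y / ( α·(V(Φ/d) - v∘ + y) + β·y/Φ² ) for (y, Φ) ∈ (-∞, 0) × (0, x_-), defined on its maximal interval (𝔶₋, 𝔶₊) ⊆ (-∞, 0) containing y₀, and suppose x₀ ≤ x_- /2. Then φ(y) ≥ ( 1/x₀ + (y - y₀)/β )^{-1} for all y ∈ [y₀, 𝔶₊); in particular inf_{y ∈ [y₀, 𝔶₊)} φ(y) ≥ ( 1/x₀ + (-y₀)/β )^{-1} > 0. -/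
/-! Along the curve, `1/φ` grows at most linearly with slope `1/β`: writing
`D = α (V(φ/d) - v∘ + y) + β y / φ²`, both summands of `D` are negative (the first because
`φ < x_∞`, the second because `y < 0`), so `|φ'| = |y| / |D| ≤ |y| / (β |y| / φ²) = φ² / β`,
i.e. `(1/φ)' = -φ'/φ² ≤ 1/β`. Integrating from `y₀` bounds `1/φ(y)` by `1/x₀ + (y - y₀)/β`. -/

open Real Set

lemma artanh_eq_real_artanh {w : ℝ} (hw : w ∈ Icc (-1) 1) :
    _root_.artanh w = Real.artanh w :=
  (Real.artanh_eq_half_log hw).symm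

lemma V_div_lt_iff_lt_xInf {d v₀ x : ℝ} (hd : 0 < d) (hv₀ : v₀ ∈ Ioo 0 (1 + Real.tanh 2)) :
    V (x / d) < v₀ ↔ x < xInf d v₀ := by
  set w := v₀ + Real.tanh (-2) with hw_def
  have hw : w ∈ Ioo (-1) 1 := by
    rw [Real.tanh_neg] at hw_def
    constructor <;> linarith [hv₀.1, hv₀.2, Real.tanh_lt_one 2]
  have htanh : Real.tanh (x / d - 2) ∈ Ioo (-1) 1 :=
    ⟨Real.neg_one_lt_tanh _, Real.tanh_lt_one _⟩
  calc V (x / d) < v₀ ↔ Real.tanh (x / d - 2) < w := by rw [V]; constructor <;> intro <;> linarith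
    _ ↔ x / d - 2 < Real.artanh w := by
      rw [← Real.artanh_lt_artanh_iff htanh hw, Real.artanh_tanh]
    _ ↔ x < xInf d v₀ := by
      rw [xInf, artanh_eq_real_artanh (Ioo_subset_Icc_self hw), sub_lt_iff_lt_add',
        div_lt_iff₀' hd]

lemma neg_sq_div_le_neg_div_add {A β y Φ : ℝ} (hA : A < 0) (hβ : 0 < β) (hy : y < 0)
    (hΦ : 0 < Φ) : -(Φ ^ 2 / β) ≤ -y / (A + β * y / Φ ^ 2) := by
  have hD : A + β * y / Φ ^ 2 < 0 :=
    add_neg hA (div_neg_of_neg_of_pos (mul_neg_of_pos_of_neg hβ hy) (by positivity))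
  rw [le_div_iff_of_neg hD]
  have hcancel : Φ ^ 2 / β * (β * y / Φ ^ 2) = y := by field_simp
  nlinarith [div_pos (pow_pos hΦ 2) hβ]

lemma neg_sq_div_le_curve_slope {α β d v₀ y Φ : ℝ} (hα : 0 < α) (hβ : 0 < β) (hd : 0 < d)
    (hv₀ : v₀ ∈ Ioo 0 (1 + Real.tanh 2)) (hy : y < 0) (hΦ : 0 < Φ) (hΦ_lt : Φ < xInf d v₀) :
    -(Φ ^ 2 / β) ≤ -y / (α * (V (Φ / d) - v₀ + y) + β * y / Φ ^ 2) := by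
  have hV := (V_div_lt_iff_lt_xInf hd hv₀).2 hΦ_lt
  exact neg_sq_div_le_neg_div_add (mul_neg_of_pos_of_neg hα (by linarith)) hβ hy hΦ

theorem inv_inv_add_div_le_of_neg_sq_div_le_deriv {φ φ' : ℝ → ℝ} {a b β : ℝ} (hab : a ≤ b)
    (hpos : ∀ y ∈ Icc a b, 0 < φ y) (hderiv : ∀ y ∈ Icc a b, HasDerivAt φ (φ' y) y)
    (hslope : ∀ y ∈ Ioo a b, -(φ y ^ 2 / β) ≤ φ' y) :
    ((φ a)⁻¹ + (b - a) / β)⁻¹ ≤ φ b := by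
  have hinv : ∀ y ∈ Icc a b, HasDerivAt (fun y ↦ (φ y)⁻¹) (-φ' y / φ y ^ 2) y :=
    fun y hy ↦ (hderiv y hy).inv (hpos y hy).ne'
  have hgrowth : (φ b)⁻¹ - (φ a)⁻¹ ≤ β⁻¹ * (b - a) := by
    refine (convex_Icc a b).image_sub_le_mul_sub_of_deriv_le
      (fun y hy ↦ (hinv y hy).continuousAt.continuousWithinAt)
      (fun y hy ↦ (hinv y (interior_subset hy)).differentiableAt.differentiableWithinAt)
      (fun y hy ↦ ?_) a (left_mem_Icc.2 hab) b (right_mem_Icc.2 hab) hab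
    rw [interior_Icc] at hy
    have hφ := pow_pos (hpos y (Ioo_subset_Icc_self hy)) 2
    rw [(hinv y (Ioo_subset_Icc_self hy)).deriv, div_le_iff₀ hφ]
    linarith [hslope y hy, div_eq_inv_mul (φ y ^ 2) β]
  have hb := hpos b (right_mem_Icc.2 hab)
  calc ((φ a)⁻¹ + (b - a) / β)⁻¹ ≤ (φ b)⁻¹⁻¹ := by
        refine inv_anti₀ (inv_pos.2 hb) ?_
        linarith [div_eq_inv_mul (b - a) β]
    _ = φ b := inv_inv _

theorem parametrized_curve_avoids_collision_general (α β d v₀ : ℝ)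
    (hα : 0 < α) (hβ : 0 < β) (hd : 0 < d)
    (hv₀ : v₀ ∈ Set.Ioo 0 (1 + Real.tanh 2))
    (xcirc : ℝ)
    (xm : ℝ) (hxm : xm = min xcirc (xInf d v₀))
    (y₀ x₀ : ℝ) (hy₀ : y₀ < 0) (hx₀pos : 0 < x₀)
    (yplus : ℝ) (hyplus : y₀ < yplus ∧ yplus ≤ 0)
    (φ : ℝ → ℝ)
    (hφdom : ∀ y : ℝ, y₀ ≤ y → y < yplus → 0 < φ y ∧ φ y < xm)
    (hφode : ∀ y : ℝ, y₀ ≤ y → y < yplus →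
      HasDerivAt φ
        (-y / (α * (V (φ y / d) - v₀ + y) + β * y / (φ y) ^ 2)) y)
    (hφinit : φ y₀ = x₀) :
    (∀ y : ℝ, y₀ ≤ y → y < yplus → (1 / x₀ + (y - y₀) / β)⁻¹ ≤ φ y) ∧
    (∀ y : ℝ, y₀ ≤ y → y < yplus → (1 / x₀ + (-y₀) / β)⁻¹ ≤ φ y) ∧
    0 < (1 / x₀ + (-y₀) / β)⁻¹ := by
  have hxm_le : xm ≤ xInf d v₀ := hxm ▸ min_le_right _ _
  have lower : ∀ y, y₀ ≤ y → y < yplus → (1 / x₀ + (y - y₀) / β)⁻¹ ≤ φ y := by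
    intro y hy₀y hyy
    have hIcc : ∀ z ∈ Icc y₀ y, y₀ ≤ z ∧ z < yplus := fun z hz ↦ ⟨hz.1, hz.2.trans_lt hyy⟩
    rw [← hφinit, one_div]
    refine inv_inv_add_div_le_of_neg_sq_div_le_deriv
      (φ' := fun z ↦ -z / (α * (V (φ z / d) - v₀ + z) + β * z / (φ z) ^ 2)) hy₀y
      (fun z hz ↦ (hφdom z (hIcc z hz).1 (hIcc z hz).2).1)
      (fun z hz ↦ hφode z (hIcc z hz).1 (hIcc z hz).2) (fun z hz ↦ ?_)
    obtain ⟨hz₀, hz_lt⟩ := hIcc z (Ioo_subset_Icc_self hz)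
    obtain ⟨hφpos, hφlt⟩ := hφdom z hz₀ hz_lt
    exact neg_sq_div_le_curve_slope hα hβ hd hv₀ (hz_lt.trans_le hyplus.2) hφpos
      (hφlt.trans_le hxm_le)
  have hbound_pos : 0 < 1 / x₀ + (-y₀) / β := add_pos (by positivity) (div_pos (neg_pos.2 hy₀) hβ)
  refine ⟨lower, fun y hy₀y hyy ↦ le_trans ?_ (lower y hy₀y hyy), inv_pos.2 hbound_pos⟩
  have hy : y ≤ 0 := (hyy.trans_le hyplus.2).le
  exact inv_anti₀ (add_pos_of_pos_of_nonneg (by positivity) (div_nonneg (by linarith) hβ.le))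
    (by gcongr; linarith)

/-- along the parametrized integral curve `φ` solving
`φ'(y) = f(y, φ(y)) = -y / ( α (V(φ/d) - v∘ + y) + β y / φ² )` with `φ(y₀) = x₀`,
one has `φ(y) ≥ ( 1/x₀ + (y - y₀)/β )⁻¹` on `[y₀, 𝔶₊)`; in particular
`inf_{y ∈ [y₀, 𝔶₊)} φ(y) ≥ ( 1/x₀ + (-y₀)/β )⁻¹ > 0`. -/
theorem parametrized_curve_avoids_collision (α β d v₀ : ℝ)
    (hα : 0 < α) (hβ : 0 < β) (hd : 0 < d)
    (hv₀ : v₀ ∈ Set.Ioo 0 (1 + Real.tanh 2))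
    (xcirc : ℝ) (hxcirc : 0 < xcirc)
    (xm : ℝ) (hxm : xm = min xcirc (xInf d v₀))
    (y₀ x₀ : ℝ) (hy₀ : y₀ < 0) (hx₀pos : 0 < x₀) (hx₀lt : x₀ < xm)
    (hx₀half : x₀ ≤ xm / 2)
    (yplus : ℝ) (hyplus : y₀ < yplus ∧ yplus ≤ 0)
    (φ : ℝ → ℝ)
    (hφdom : ∀ y : ℝ, y₀ ≤ y → y < yplus → 0 < φ y ∧ φ y < xm)
    (hφode : ∀ y : ℝ, y₀ ≤ y → y < yplus →
      HasDerivAt φ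
        (-y / (α * (V (φ y / d) - v₀ + y) + β * y / (φ y) ^ 2)) y)
    (hφinit : φ y₀ = x₀) :
    (∀ y : ℝ, y₀ ≤ y → y < yplus → (1 / x₀ + (y - y₀) / β)⁻¹ ≤ φ y) ∧
    (∀ y : ℝ, y₀ ≤ y → y < yplus → (1 / x₀ + (-y₀) / β)⁻¹ ≤ φ y) ∧
    0 < (1 / x₀ + (-y₀) / β)⁻¹ :=
  parametrized_curve_avoids_collision_general α β d v₀ hα hβ hd hv₀ xcirc xm hxm y₀ x₀ hy₀ hx₀pos
    yplus hyplus φ hφdom hφode hφinit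
end
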